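/- arXiv:2005.12245 — 2 statements merged into one kernel-verified Lean document; each statement's English description precedes it below -/
import Mathlib

section
/- Let s be a finite nonempty set of directions at a vertex, given by distinct angles θ_{v_1} ≤ θ_{v_2} ≤ ⋯ ≤ θ_{v_p} in [0, 2π) with p ≥ 2, and set v_0 := v_p. If for every k = 1, …, p, rotating from v_k anticlockwise one needs more than α radians to reach v_{k-1}, i.e. ∠(v_k, v_{k-1}) > α for all k, then there is no angle φ such that every direction θ ∈ {θ_{v_1}, …, θ_{v_p}} satisfies (θ − φ) mod 2π ≤ α; that is, no circular sector of central angle α encloses all directions of s. -/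
open Real

noncomputable def amod (x : ℝ) : ℝ := toIcoMod Real.two_pi_pos 0 x

noncomputable def ang (a b : ℝ) : ℝ := amod (b - a)

theorem stmt3 (α : ℝ) {p : ℕ} (hp : 2 ≤ p) (θ : Fin p → ℝ) (hmono : StrictMono θ)
    (hrange : ∀ a, θ a ∈ Set.Ico 0 (2 * π))
    (hgap : ∀ k : Fin p, α < ang (θ k) (θ (k - ⟨1, by omega⟩))) :
    ¬ ∃ φ : ℝ, ∀ a : Fin p, ang φ (θ a) ≤ α := by
  rintro ⟨φ, hφ⟩
  have hpne : Nonempty (Fin p) := ⟨⟨0, by omega⟩⟩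
  set f : Fin p → ℝ := fun a => amod (θ a - φ) with hf
  have hmem : ∀ a, f a ∈ Set.Ico (0:ℝ) (2 * π) := by
    intro a
    have := toIcoMod_mem_Ico Real.two_pi_pos 0 (θ a - φ)
    simpa [f, amod] using this
  obtain ⟨a, -, ha⟩ := Finset.exists_min_image Finset.univ f ⟨Classical.arbitrary _, Finset.mem_univ _⟩
  set b : Fin p := a - ⟨1, by omega⟩ with hb
  have hba : f a ≤ f b := ha b (Finset.mem_univ b)
  -- θ x - φ = f x + z • 2π
  have hsub : ∀ x : Fin p, ∃ z : ℤ, θ x - φ = f x + z • (2 * π) := by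
    intro x
    have := (toIcoMod_eq_iff Real.two_pi_pos (a := 0) (b := θ x - φ)
      (c := toIcoMod Real.two_pi_pos 0 (θ x - φ))).mp rfl
    obtain ⟨-, z, hz⟩ := this
    exact ⟨z, by simpa [f, amod] using hz⟩
  obtain ⟨za, hza⟩ := hsub a
  obtain ⟨zb, hzb⟩ := hsub b
  have key : ang (θ a) (θ b) = f b - f a := by
    rw [ang, amod, toIcoMod_eq_iff Real.two_pi_pos]
    constructor
    · constructor
      · linarith
      · have h1 := (hmem b).2
        have h2 := (hmem a).1
        rw [zero_add]; linarith
    · exact ⟨zb - za, by push_cast [sub_smul]; linarith⟩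
  have hgapa := hgap a
  rw [← hb] at hgapa
  have hfb : f b ≤ α := hφ b
  have hfa : 0 ≤ f a := (hmem a).1
  rw [key] at hgapa
  linarith
end

section
/- Let s be a finite nonempty set of directions at a vertex (angles in [0, 2π)), α ∈ (0, 2π), and let u be a direction not in s. Define, for any direction j, v_j^{(s)} := |{k ∈ s : (θ_k − θ_j) mod 2π ≤ α}|, and v^{(s)} := max_{j ∈ s} v_j^{(s)}. Then v_u^{(s)} ≤ v^{(s)}. -/
open Real

/-!
Let `j` be the first direction of `s` met when turning from `u`, i.e. the one minimising
`ang u j` among those in the `α`-sector at `u`. For every other `k` in that sector the angles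
add up without wrapping around, `ang u k = ang u j + ang j k`, so `ang j k ≤ ang u k ≤ α`:
the sector at `j` contains the sector at `u`.
-/
lemma amod_mem_Ico (x : ℝ) : amod x ∈ Set.Ico 0 (2 * π) := by
  simpa [amod] using toIcoMod_mem_Ico two_pi_pos 0 x

lemma amod_eq_self {x : ℝ} (hx : x ∈ Set.Ico 0 (2 * π)) : amod x = x :=
  (toIcoMod_eq_self two_pi_pos).2 (by simpa using hx)

lemma amod_sub_amod (x y : ℝ) : amod (amod x - amod y) = amod (x - y) := by
  refine (toIcoMod_eq_toIcoMod two_pi_pos).2 ⟨toIcoDiv two_pi_pos 0 x - toIcoDiv two_pi_pos 0 y, ?_⟩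
  have hx := toIcoMod_sub_self two_pi_pos 0 x
  have hy := toIcoMod_sub_self two_pi_pos 0 y
  simp only [amod, zsmul_eq_mul] at *
  push_cast at *
  linear_combination hy - hx

lemma ang_mem_Ico (a b : ℝ) : ang a b ∈ Set.Ico 0 (2 * π) :=
  amod_mem_Ico (b - a)

lemma ang_eq_sub_of_le {u j k : ℝ} (h : ang u j ≤ ang u k) : ang j k = ang u k - ang u j := by
  have hlt : ang u k - ang u j < 2 * π := by linarith [(ang_mem_Ico u j).1, (ang_mem_Ico u k).2]
  rw [← amod_eq_self ⟨sub_nonneg.2 h, hlt⟩,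
    ang, ang, ang, amod_sub_amod, sub_sub_sub_cancel_right]

lemma filter_ang_le_subset {s : Finset ℝ} {α u j : ℝ}
    (hj : ∀ k ∈ s, ang u k ≤ α → ang u j ≤ ang u k) :
    s.filter (fun k => ang u k ≤ α) ⊆ s.filter (fun k => ang j k ≤ α) := by
  intro k hk
  rw [Finset.mem_filter] at hk ⊢
  refine ⟨hk.1, ?_⟩
  rw [ang_eq_sub_of_le (hj k hk.1 hk.2)]
  linarith [hk.2, (ang_mem_Ico u j).1]

theorem stmt5_general (s : Finset ℝ) (hs : s.Nonempty)
    (α : ℝ) (u : ℝ) :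
    (s.filter fun k => ang u k ≤ α).card ≤
      s.sup' hs fun j => (s.filter fun k => ang j k ≤ α).card := by
  rcases (s.filter fun k => ang u k ≤ α).eq_empty_or_nonempty with hempty | hne
  · rw [hempty, Finset.card_empty]
    exact Nat.zero_le _
  obtain ⟨j, hj, hmin⟩ := Finset.exists_min_image _ (ang u) hne
  calc (s.filter fun k => ang u k ≤ α).card
      ≤ (s.filter fun k => ang j k ≤ α).card :=
        Finset.card_le_card <| filter_ang_le_subset fun k hk hkα =>
          hmin k (Finset.mem_filter.2 ⟨hk, hkα⟩)
    _ ≤ _ := Finset.le_sup' (fun j => (s.filter fun k => ang j k ≤ α).card) (Finset.mem_filter.1 hj).1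

theorem stmt5 (s : Finset ℝ) (hs : s.Nonempty) (hsub : ∀ θ ∈ s, θ ∈ Set.Ico 0 (2 * π))
    (α : ℝ) (hα : α ∈ Set.Ioo 0 (2 * π)) (u : ℝ) (hu : u ∉ s) (hu' : u ∈ Set.Ico 0 (2 * π)) :
    (s.filter fun k => ang u k ≤ α).card ≤
      s.sup' hs fun j => (s.filter fun k => ang j k ≤ α).card :=
  stmt5_general s hs α u
end
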